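/- Let f ∈ C(ℝⁿ) ∩ L^∞(ℝⁿ) and let g ∈ C(ℝⁿ) be radially symmetric. Suppose there exist α ≥ 0, β ≥ 0, γ₀ ∈ ℝ such that f(x) e^{α|x|} |x|^β → γ₀ as |x| → ∞, and ∫_{ℝⁿ} |g(x)| e^{α|x|} (1 + |x|^β) dx < ∞. Then e^{α|y|} |y|^β ∫_{ℝⁿ} g(x + y) f(x) dx → γ₀ ∫_{ℝⁿ} g(x) e^{−α x₁} dx as |y| → ∞. -/

import Mathlib

/-!
After the substitution `x ↦ x - y` the integrand is `g x · f (x - y)`. If `|y| → ∞` with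
`y / |y| → ω`, then `|y| - |x - y| → ⟪x, ω⟫`, so `e^{α|y|} |y|^β f (x - y) → γ₀ e^{α⟪x, ω⟫}`.
Since `e^{α|y|} |y|^β ≤ 2^β e^{α|x|}(1 + |x|^β) · e^{α|x-y|}(1 + |x-y|^β)` and the second factor
times `|f (x - y)|` is bounded, dominated convergence applies. Every sequence going to infinity
has a subsequence whose directions converge, and the limit `γ₀ ∫ g x e^{α⟪x, ω⟫}` does not depend
on the unit vector `ω` because `g` is radial (a reflection maps `ω` to `-e₁`).
-/

open Real MeasureTheory Filter Topology Asymptotics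
open scoped RealInnerProductSpace

lemma rpow_le_two_rpow_mul_one_add_rpow_mul {a b c β : ℝ} (ha : 0 ≤ a) (hb : 0 ≤ b)
    (hc : 0 ≤ c) (hβ : 0 ≤ β) (h : c ≤ a + b) :
    c ^ β ≤ 2 ^ β * ((1 + a ^ β) * (1 + b ^ β)) := by
  have hmax : c ≤ 2 * max a b := by linarith [le_max_left a b, le_max_right a b]
  have hmax_rpow : max a b ^ β ≤ (1 + a ^ β) * (1 + b ^ β) := by
    have := rpow_nonneg ha β
    have := rpow_nonneg hb β
    rcases max_choice a b with hab | hab <;> rw [hab] <;> nlinarith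
  calc c ^ β ≤ (2 * max a b) ^ β := rpow_le_rpow hc hmax hβ
    _ = 2 ^ β * max a b ^ β := mul_rpow zero_le_two (le_max_of_le_left ha)
    _ ≤ 2 ^ β * ((1 + a ^ β) * (1 + b ^ β)) := by gcongr

lemma exp_mul_mul_rpow_le_of_le_add {a b c α β : ℝ} (ha : 0 ≤ a) (hb : 0 ≤ b) (hc : 0 ≤ c)
    (hα : 0 ≤ α) (hβ : 0 ≤ β) (h : c ≤ a + b) :
    exp (α * c) * c ^ β ≤
      2 ^ β * (exp (α * a) * (1 + a ^ β)) * (exp (α * b) * (1 + b ^ β)) := by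
  have hexp : exp (α * c) ≤ exp (α * a) * exp (α * b) := by
    rw [← exp_add, ← mul_add]
    gcongr
  calc exp (α * c) * c ^ β
      ≤ (exp (α * a) * exp (α * b)) * (2 ^ β * ((1 + a ^ β) * (1 + b ^ β))) := by
        gcongr
        exact rpow_le_two_rpow_mul_one_add_rpow_mul ha hb hc hβ h
    _ = _ := by ring

section Bound

variable {E : Type*} [NormedAddCommGroup E] [ProperSpace E] {f : E → ℝ} {α β γ₀ : ℝ}

lemma exists_abs_mul_exp_mul_one_add_rpow_le (hf : Continuous f) (hβ : 0 ≤ β)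
    (hlim : Tendsto (fun x => f x * exp (α * ‖x‖) * ‖x‖ ^ β) (cocompact E) (𝓝 γ₀)) :
    ∃ C, ∀ x, |f x| * exp (α * ‖x‖) * (1 + ‖x‖ ^ β) ≤ C := by
  set w : E → ℝ := fun x => |f x| * exp (α * ‖x‖) * (1 + ‖x‖ ^ β)
  have hw : Continuous w := by
    have := continuous_rpow_const hβ
    fun_prop
  have hw_le : w =O[cocompact E] (fun x => f x * exp (α * ‖x‖) * ‖x‖ ^ β) := by
    refine IsBigO.of_bound 2 ?_
    filter_upwards [tendsto_norm_cocompact_atTop.eventually_ge_atTop 1] with x hx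
    have hx_rpow : 1 ≤ ‖x‖ ^ β := one_le_rpow hx hβ
    have hfe : 0 ≤ |f x| * exp (α * ‖x‖) := by positivity
    rw [norm_of_nonneg (by positivity), Real.norm_eq_abs, abs_mul, abs_mul, abs_exp,
      abs_of_nonneg (rpow_nonneg (norm_nonneg x) β)]
    nlinarith
  obtain ⟨C, hC⟩ := (hw.isBounded_range_iff_isBigO.2 (hw_le.trans (hlim.isBigO_one ℝ))).bddAbove
  exact ⟨C, fun x => hC ⟨x, rfl⟩⟩

end Bound

section Direction

variable {E ι : Type*} [NormedAddCommGroup E] [InnerProductSpace ℝ E] {l : Filter ι}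
  {y : ι → E} {ω : E}

lemma tendsto_norm_sub_div_norm (hy : Tendsto (fun k => ‖y k‖) l atTop)
    (hdir : Tendsto (fun k => ‖y k‖⁻¹ • y k) l (𝓝 ω)) (x : E) :
    Tendsto (fun k => ‖x - y k‖ / ‖y k‖) l (𝓝 ‖ω‖) := by
  have hx : Tendsto (fun k => ‖y k‖⁻¹ • x) l (𝓝 0) := by
    simpa using (tendsto_inv_atTop_zero.comp hy).smul_const x
  convert (hx.sub hdir).norm using 1
  · ext k
    rw [← smul_sub, norm_smul, norm_inv, norm_norm, inv_mul_eq_div]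
  · rw [zero_sub, norm_neg]

lemma tendsto_norm_sub_norm_sub (hy : Tendsto (fun k => ‖y k‖) l atTop)
    (hdir : Tendsto (fun k => ‖y k‖⁻¹ • y k) l (𝓝 ω)) (hω : ‖ω‖ = 1) (x : E) :
    Tendsto (fun k => ‖y k‖ - ‖x - y k‖) l (𝓝 ⟪x, ω⟫) := by
  have hnum : Tendsto (fun k => 2 * ⟪x, ‖y k‖⁻¹ • y k⟫ - ‖x‖ ^ 2 / ‖y k‖) l
      (𝓝 (2 * ⟪x, ω⟫ - 0)) :=
    ((tendsto_const_nhds.inner hdir).const_mul 2).sub (tendsto_const_nhds.div_atTop hy)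
  have hden : Tendsto (fun k => 1 + ‖x - y k‖ / ‖y k‖) l (𝓝 (1 + 1)) := by
    simpa [hω] using (tendsto_norm_sub_div_norm hy hdir x).const_add 1
  have hlim := hnum.div hden (by norm_num)
  rw [show (2 * ⟪x, ω⟫ - 0) / (1 + 1) = ⟪x, ω⟫ by ring] at hlim
  refine hlim.congr' ?_
  filter_upwards [hy.eventually_gt_atTop 0] with k hk
  rw [Pi.div_apply, real_inner_smul_right, div_eq_iff (by positivity)]
  field_simp
  linear_combination (norm_sub_sq_real x (y k))

lemma tendsto_comp_sub_mul_exp_mul_rpow {f : E → ℝ} {α β γ₀ : ℝ}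
    (hf : Tendsto (fun x => f x * exp (α * ‖x‖) * ‖x‖ ^ β) (cocompact E) (𝓝 γ₀))
    (hy : Tendsto (fun k => ‖y k‖) l atTop)
    (hdir : Tendsto (fun k => ‖y k‖⁻¹ • y k) l (𝓝 ω)) (hω : ‖ω‖ = 1) (x : E) :
    Tendsto (fun k => f (x - y k) * exp (α * ‖y k‖) * ‖y k‖ ^ β) l
      (𝓝 (γ₀ * exp (α * ⟪x, ω⟫))) := by
  have hz : Tendsto (fun k => ‖x - y k‖) l atTop := by
    refine tendsto_atTop_mono (fun k => ?_) (tendsto_atTop_add_const_right _ (-‖x‖) hy)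
    linarith [norm_sub_norm_le (y k) x, norm_sub_rev (y k) x]
  have hf_z := (hf.mono_left Metric.cobounded_le_cocompact).comp
    (tendsto_norm_atTop_iff_cobounded.1 hz)
  have hexp := (continuous_exp.tendsto _).comp
    ((tendsto_norm_sub_norm_sub hy hdir hω x).const_mul α)
  have hrpow : Tendsto (fun k => (‖y k‖ / ‖x - y k‖) ^ β) l (𝓝 1) := by
    have hratio := ((tendsto_norm_sub_div_norm hy hdir x).inv₀ (by simp [hω]))
    simp only [hω, inv_one, inv_div] at hratio
    simpa using hratio.rpow_const (p := β) (Or.inl one_ne_zero)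
  have hlim := (hf_z.mul hexp).mul hrpow
  rw [mul_one] at hlim
  refine hlim.congr' ?_
  filter_upwards [hz.eventually_gt_atTop 0] with k hk
  have hexp_add : exp (α * ‖x - y k‖) * exp (α * (‖y k‖ - ‖x - y k‖)) = exp (α * ‖y k‖) := by
    rw [← exp_add]; ring_nf
  have hrpow_mul : ‖x - y k‖ ^ β * (‖y k‖ / ‖x - y k‖) ^ β = ‖y k‖ ^ β := by
    rw [← mul_rpow hk.le (by positivity), mul_div_cancel₀ _ hk.ne']
  simp only [Function.comp_apply]
  rw [← hexp_add, ← hrpow_mul]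
  ring

end Direction

section Radial

variable {E : Type*} [NormedAddCommGroup E] [InnerProductSpace ℝ E] [FiniteDimensional ℝ E]
  [MeasurableSpace E] [BorelSpace E]

lemma integral_mul_comp_inner_eq_of_norm_eq {g : E → ℝ} (hg : ∀ x y, ‖x‖ = ‖y‖ → g x = g y)
    (φ : ℝ → ℝ) {u v : E} (huv : ‖u‖ = ‖v‖) :
    ∫ x, g x * φ ⟪x, u⟫ = ∫ x, g x * φ ⟪x, v⟫ := by
  set R := (ℝ ∙ (v - u))ᗮ.reflection
  have hRv : R v = u := Submodule.reflection_sub huv.symm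
  have hR : ∀ x, g (R x) * φ ⟪R x, u⟫ = g x * φ ⟪x, v⟫ := fun x => by
    rw [hg _ _ (R.norm_map x), ← hRv, R.inner_map_map]
  simp_rw [← hR]
  exact (R.measurePreserving.integral_comp R.toHomeomorph.measurableEmbedding _).symm

end Radial

lemma exists_subseq_tendsto_direction {E : Type*} [NormedAddCommGroup E] [NormedSpace ℝ E]
    [ProperSpace E] {u : ℕ → E} (hu : Tendsto (fun k => ‖u k‖) atTop atTop) :
    ∃ ω : E, ‖ω‖ = 1 ∧ ∃ φ : ℕ → ℕ, StrictMono φ ∧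
      Tendsto (fun k => ‖u (φ k)‖⁻¹ • u (φ k)) atTop (𝓝 ω) := by
  have hmem : ∀ k, ‖u k‖⁻¹ • u k ∈ Metric.closedBall (0 : E) 1 := fun k => by
    rw [mem_closedBall_zero_iff, norm_smul, norm_inv, norm_norm]
    exact inv_mul_le_one_of_le₀ le_rfl (norm_nonneg _)
  obtain ⟨ω, -, φ, hφ, hlim⟩ := (isCompact_closedBall (0 : E) 1).tendsto_subseq hmem
  refine ⟨ω, tendsto_nhds_unique hlim.norm (tendsto_const_nhds.congr' ?_), φ, hφ, hlim⟩
  filter_upwards [(hu.comp hφ.tendsto_atTop).eventually_gt_atTop 0] with k hk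
  exact (norm_smul_inv_norm (norm_pos_iff.1 hk)).symm

section Interaction

variable {E : Type*} [NormedAddCommGroup E] [InnerProductSpace ℝ E] [FiniteDimensional ℝ E]
  [MeasurableSpace E] [BorelSpace E] {f g : E → ℝ} {α β γ₀ : ℝ}

lemma tendsto_exp_mul_rpow_mul_integral_comp_add_of_direction
    (hf_cont : Continuous f) (hg_cont : Continuous g) (hα : 0 ≤ α) (hβ : 0 ≤ β)
    (hf_lim : Tendsto (fun x => f x * exp (α * ‖x‖) * ‖x‖ ^ β) (cocompact E) (𝓝 γ₀))
    (hg_int : Integrable fun x => |g x| * exp (α * ‖x‖) * (1 + ‖x‖ ^ β))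
    {ι : Type*} {l : Filter ι} [l.IsCountablyGenerated] {y : ι → E} {ω : E}
    (hy : Tendsto (fun k => ‖y k‖) l atTop)
    (hdir : Tendsto (fun k => ‖y k‖⁻¹ • y k) l (𝓝 ω)) (hω : ‖ω‖ = 1) :
    Tendsto (fun k => exp (α * ‖y k‖) * ‖y k‖ ^ β * ∫ x, g (x + y k) * f x) l
      (𝓝 (γ₀ * ∫ x, g x * exp (α * ⟪x, ω⟫))) := by
  obtain ⟨C, hC⟩ := exists_abs_mul_exp_mul_one_add_rpow_le hf_cont hβ hf_lim
  have hshift : ∀ y : E, exp (α * ‖y‖) * ‖y‖ ^ β * ∫ x, g (x + y) * f x =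
      ∫ x, exp (α * ‖y‖) * ‖y‖ ^ β * (g x * f (x - y)) := fun y => by
    rw [integral_const_mul, ← integral_add_right_eq_self (fun x => g x * f (x - y)) y]
    simp only [add_sub_cancel_right]
  have hbound : ∀ y x : E, ‖exp (α * ‖y‖) * ‖y‖ ^ β * (g x * f (x - y))‖ ≤
      2 ^ β * C * (|g x| * exp (α * ‖x‖) * (1 + ‖x‖ ^ β)) := fun y x => by
    have hweight := exp_mul_mul_rpow_le_of_le_add (norm_nonneg x) (norm_nonneg (x - y))
      (norm_nonneg y) hα hβ (norm_le_norm_add_norm_sub x y)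
    rw [norm_mul, norm_of_nonneg (by positivity), norm_mul, Real.norm_eq_abs, Real.norm_eq_abs]
    calc exp (α * ‖y‖) * ‖y‖ ^ β * (|g x| * |f (x - y)|)
        ≤ 2 ^ β * (exp (α * ‖x‖) * (1 + ‖x‖ ^ β)) * (exp (α * ‖x - y‖) * (1 + ‖x - y‖ ^ β)) *
            (|g x| * |f (x - y)|) := by gcongr
      _ = 2 ^ β * (|f (x - y)| * exp (α * ‖x - y‖) * (1 + ‖x - y‖ ^ β)) *
            (|g x| * exp (α * ‖x‖) * (1 + ‖x‖ ^ β)) := by ring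
      _ ≤ 2 ^ β * C * (|g x| * exp (α * ‖x‖) * (1 + ‖x‖ ^ β)) := by gcongr; exact hC _
  simp_rw [hshift, ← integral_const_mul]
  refine tendsto_integral_filter_of_dominated_convergence _
    (Eventually.of_forall fun k => by fun_prop) (Eventually.of_forall fun k =>
      Eventually.of_forall (hbound (y k))) (hg_int.const_mul _) (Eventually.of_forall fun x => ?_)
  convert (tendsto_comp_sub_mul_exp_mul_rpow hf_lim hy hdir hω x).mul_const (g x) using 2
  · ring
  · ring

theorem tendsto_exp_mul_rpow_mul_integral_comp_add
    (hf_cont : Continuous f) (hg_cont : Continuous g)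
    (hg_radial : ∀ x y : E, ‖x‖ = ‖y‖ → g x = g y) (hα : 0 ≤ α) (hβ : 0 ≤ β)
    (hf_lim : Tendsto (fun x => f x * exp (α * ‖x‖) * ‖x‖ ^ β) (cocompact E) (𝓝 γ₀))
    (hg_int : Integrable fun x => |g x| * exp (α * ‖x‖) * (1 + ‖x‖ ^ β))
    {ω : E} (hω : ‖ω‖ = 1) :
    Tendsto (fun y => exp (α * ‖y‖) * ‖y‖ ^ β * ∫ x, g (x + y) * f x) (cocompact E)
      (𝓝 (γ₀ * ∫ x, g x * exp (α * ⟪x, ω⟫))) := by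
  have : (cocompact E).IsCountablyGenerated := by
    rw [← Metric.cobounded_eq_cocompact, ← comap_norm_atTop]
    infer_instance
  refine tendsto_of_subseq_tendsto fun u hu => ?_
  have hu_norm := tendsto_norm_cocompact_atTop.comp hu
  obtain ⟨ω', hω', φ, hφ, hdir⟩ := exists_subseq_tendsto_direction hu_norm
  refine ⟨φ, ?_⟩
  rw [integral_mul_comp_inner_eq_of_norm_eq hg_radial (fun t => exp (α * t)) (hω.trans hω'.symm)]
  exact tendsto_exp_mul_rpow_mul_integral_comp_add_of_direction hf_cont hg_cont hα hβ hf_lim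
    hg_int (hu_norm.comp hφ.tendsto_atTop) hdir hω'

end Interaction

theorem stmt_3_general (n : ℕ) (hn : 0 < n) (f g : EuclideanSpace ℝ (Fin n) → ℝ)
    (hf_cont : Continuous f)
    (hg_cont : Continuous g)
    (hg_radial : ∀ x y : EuclideanSpace ℝ (Fin n), ‖x‖ = ‖y‖ → g x = g y)
    (α β γ₀ : ℝ) (hα : 0 ≤ α) (hβ : 0 ≤ β)
    (hf_lim : Tendsto (fun x : EuclideanSpace ℝ (Fin n) => f x * exp (α * ‖x‖) * ‖x‖ ^ β)
      (cocompact (EuclideanSpace ℝ (Fin n))) (nhds γ₀))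
    (hg_int : Integrable (fun x : EuclideanSpace ℝ (Fin n) =>
      |g x| * exp (α * ‖x‖) * (1 + ‖x‖ ^ β))) :
    Tendsto (fun y : EuclideanSpace ℝ (Fin n) =>
        exp (α * ‖y‖) * ‖y‖ ^ β * ∫ x, g (x + y) * f x)
      (cocompact (EuclideanSpace ℝ (Fin n)))
      (nhds (γ₀ * ∫ x : EuclideanSpace ℝ (Fin n), g x * exp (-(α * x ⟨0, hn⟩)))) := by
  have he : ‖-EuclideanSpace.single (⟨0, hn⟩ : Fin n) (1 : ℝ)‖ = 1 := by simp
  convert tendsto_exp_mul_rpow_mul_integral_comp_add hf_cont hg_cont hg_radial hα hβ hf_lim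
    hg_int he using 5 with x
  simp [inner_neg_right, EuclideanSpace.inner_single_right]

/-- Berestycki–Lions interaction lemma: if `f` is continuous, bounded, with
`f(x) e^{α|x|}|x|^β → γ₀` as `|x| → ∞`, and `g` is continuous, radially symmetric and
`∫ |g(x)| e^{α|x|}(1+|x|^β) dx < ∞`, then
`e^{α|y|}|y|^β ∫ g(x+y) f(x) dx → γ₀ ∫ g(x) e^{−α x₁} dx` as `|y| → ∞`. -/
theorem stmt_3 (n : ℕ) (hn : 0 < n) (f g : EuclideanSpace ℝ (Fin n) → ℝ)
    (hf_cont : Continuous f) (hf_bdd : ∃ M, ∀ x, |f x| ≤ M)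
    (hg_cont : Continuous g)
    (hg_radial : ∀ x y : EuclideanSpace ℝ (Fin n), ‖x‖ = ‖y‖ → g x = g y)
    (α β γ₀ : ℝ) (hα : 0 ≤ α) (hβ : 0 ≤ β)
    (hf_lim : Tendsto (fun x : EuclideanSpace ℝ (Fin n) => f x * exp (α * ‖x‖) * ‖x‖ ^ β)
      (cocompact (EuclideanSpace ℝ (Fin n))) (nhds γ₀))
    (hg_int : Integrable (fun x : EuclideanSpace ℝ (Fin n) =>
      |g x| * exp (α * ‖x‖) * (1 + ‖x‖ ^ β))) :
    Tendsto (fun y : EuclideanSpace ℝ (Fin n) =>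
        exp (α * ‖y‖) * ‖y‖ ^ β * ∫ x, g (x + y) * f x)
      (cocompact (EuclideanSpace ℝ (Fin n)))
      (nhds (γ₀ * ∫ x : EuclideanSpace ℝ (Fin n), g x * exp (-(α * x ⟨0, hn⟩)))) :=
  stmt_3_general n hn f g hf_cont hg_cont hg_radial α β γ₀ hα hβ hf_lim hg_int
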